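/- Let I be a nonempty index set, {ρ_i}_{i∈I} star-shaped risk measures with representations ρ_i(X) = min_{γ∈Γ_i} γ(X) for sets Γ_i of convex risk measures (minima attained), let A be a nonempty set and (X_a)_{a∈A} a family of elements of 𝒳. Then inf_{a∈A} sup_{i∈I} ρ_i(X_a) = inf_{γ ∈ Γ̃_I} inf_{a∈A} γ(X_a), where Γ̃_I = ∩_{i∈I} Γ̃_i. Moreover, a* ∈ A minimizes a ↦ sup_{i∈I} ρ_i(X_a) over A if and only if there exists γ* ∈ Γ̃_I such that (a*, γ*) minimizes (a, γ) ↦ γ(X_a) over A × Γ̃_I. -/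

import Mathlib

open BoundedContinuousFunction

def IsRiskMeasure {Ω : Type*} [TopologicalSpace Ω] (ρ : (Ω →ᵇ ℝ) → ℝ) : Prop :=
  (∀ X Y : Ω →ᵇ ℝ, Y ≤ X → ρ Y ≤ ρ X) ∧
  (∀ (X : Ω →ᵇ ℝ) (m : ℝ), ρ (X - const Ω m) = ρ X - m) ∧
  ρ 0 = 0

def IsStarShaped {Ω : Type*} [TopologicalSpace Ω] (ρ : (Ω →ᵇ ℝ) → ℝ) : Prop :=
  ∀ (X : Ω →ᵇ ℝ) (l : ℝ), 1 < l → l * ρ X ≤ ρ (l • X)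

def IsConvex {Ω : Type*} [TopologicalSpace Ω] (ρ : (Ω →ᵇ ℝ) → ℝ) : Prop :=
  ∀ (X Y : Ω →ᵇ ℝ) (t : ℝ), t ∈ Set.Icc (0 : ℝ) 1 →
    ρ (t • X + (1 - t) • Y) ≤ t * ρ X + (1 - t) * ρ Y

/-- The relaxation `Γ̃` of a set `Γ` of convex risk measures. -/
def relaxation {Ω : Type*} [TopologicalSpace Ω] (Γ : Set ((Ω →ᵇ ℝ) → ℝ)) :
    Set ((Ω →ᵇ ℝ) → ℝ) :=
  {g | (IsRiskMeasure g ∧ IsConvex g) ∧ ∀ X : Ω →ᵇ ℝ, ∃ γ ∈ Γ, γ X ≤ g X}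

/-!
Write `ρ̄ = ⨆ i, ρ i`. Every `γ ∈ ⋂ i, Γ̃ i` dominates some member of each `Γ i`, hence each
`ρ i`, hence `ρ̄`. Conversely, fix `X`, put `c = ρ̄ X` and `Z = X - c`, which every `ρ i` accepts.
By star-shapedness every `ρ i` then accepts the whole segment `[0, Z]`, so it is dominated by the
convex risk measure `Y ↦ inf_{l ∈ [0,1]} sup (Y - l Z)`, which takes the value `c` at `X`. Hence
`ρ̄` is the pointwise minimum of `⋂ i, Γ̃ i`, and both claims are formal consequences of that.
-/

open Set

theorem sInf_range_eq_sInf_of_isLeast {α A : Type*} {f : α → ℝ} {G : Set (α → ℝ)}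
    (hf : ∀ x, IsLeast {y | ∃ γ ∈ G, y = γ x} (f x)) (Xf : A → α) :
    sInf {y | ∃ a, y = f (Xf a)} = sInf {y | ∃ γ ∈ G, ∃ a, y = γ (Xf a)} := by
  refine csInf_eq_csInf_of_forall_exists_le ?_ ?_
  · rintro _ ⟨a, rfl⟩
    obtain ⟨γ, hγ, hγa⟩ := (hf (Xf a)).1
    exact ⟨_, ⟨γ, hγ, a, rfl⟩, hγa.ge⟩
  · rintro _ ⟨γ, hγ, a, rfl⟩
    exact ⟨_, ⟨a, rfl⟩, (hf (Xf a)).2 ⟨γ, hγ, rfl⟩⟩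

theorem forall_le_iff_exists_forall_le_of_isLeast {α A : Type*} {f : α → ℝ} {G : Set (α → ℝ)}
    (hf : ∀ x, IsLeast {y | ∃ γ ∈ G, y = γ x} (f x)) (Xf : A → α) (a' : A) :
    (∀ a, f (Xf a') ≤ f (Xf a)) ↔ ∃ γ' ∈ G, ∀ a, ∀ γ ∈ G, γ' (Xf a') ≤ γ (Xf a) := by
  constructor
  · intro hmin
    obtain ⟨γ', hγ', hγ'a'⟩ := (hf (Xf a')).1
    exact ⟨γ', hγ', fun a γ hγ => hγ'a' ▸ (hmin a).trans ((hf (Xf a)).2 ⟨γ, hγ, rfl⟩)⟩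
  · rintro ⟨γ', hγ', hopt⟩ a
    obtain ⟨γ, hγ, hγa⟩ := (hf (Xf a)).1
    calc f (Xf a') ≤ γ' (Xf a') := (hf (Xf a')).2 ⟨γ', hγ', rfl⟩
      _ ≤ γ (Xf a) := hopt a γ hγ
      _ = f (Xf a) := hγa.symm

section RiskMeasure

variable {Ω : Type*} [TopologicalSpace Ω]

namespace IsRiskMeasure

variable {ρ : (Ω →ᵇ ℝ) → ℝ}

theorem map_const (hρ : IsRiskMeasure ρ) (m : ℝ) : ρ (const Ω m) = m := by
  have h := hρ.2.1 (const Ω m) m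
  rw [sub_self, hρ.2.2] at h
  linarith

theorem map_add_const (hρ : IsRiskMeasure ρ) (X : Ω →ᵇ ℝ) (m : ℝ) :
    ρ (X + const Ω m) = ρ X + m := by
  have h := hρ.2.1 (X + const Ω m) m
  rw [add_sub_cancel_right] at h
  linarith

theorem le_norm (hρ : IsRiskMeasure ρ) (X : Ω →ᵇ ℝ) : ρ X ≤ ‖X‖ := by
  have hX : X ≤ const Ω ‖X‖ := fun ω => (le_abs_self (X ω)).trans (X.norm_coe_le_norm ω)
  simpa only [hρ.map_const] using hρ.1 _ _ hX

theorem neg_norm_le (hρ : IsRiskMeasure ρ) (X : Ω →ᵇ ℝ) : -‖X‖ ≤ ρ X := by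
  have hX : const Ω (-‖X‖) ≤ X := fun ω => by
    simpa using neg_le_of_abs_le (X.norm_coe_le_norm ω)
  simpa only [hρ.map_const] using hρ.1 _ _ hX

end IsRiskMeasure

theorem IsStarShaped.map_smul_nonpos {ρ : (Ω →ᵇ ℝ) → ℝ} (hs : IsStarShaped ρ) (h0 : ρ 0 = 0)
    {Z : Ω →ᵇ ℝ} (hZ : ρ Z ≤ 0) {l : ℝ} (hl : l ∈ Icc (0 : ℝ) 1) : ρ (l • Z) ≤ 0 := by
  obtain rfl | hl0 := hl.1.eq_or_lt
  · rw [zero_smul, h0]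
  obtain rfl | hl1 := hl.2.eq_or_lt
  · rwa [one_smul]
  have h := hs (l • Z) l⁻¹ (one_lt_inv₀ hl0 |>.2 hl1)
  rw [smul_smul, inv_mul_cancel₀ hl0.ne', one_smul] at h
  nlinarith [inv_pos.2 hl0]

theorem mem_relaxation_iff {ρ : (Ω →ᵇ ℝ) → ℝ} {Γ : Set ((Ω →ᵇ ℝ) → ℝ)}
    (hrep : ∀ X, IsLeast {y | ∃ γ ∈ Γ, y = γ X} (ρ X)) {g : (Ω →ᵇ ℝ) → ℝ} :
    g ∈ relaxation Γ ↔ (IsRiskMeasure g ∧ IsConvex g) ∧ ∀ X, ρ X ≤ g X := by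
  refine and_congr_right fun _ => forall_congr' fun X => ⟨?_, fun hX => ?_⟩
  · rintro ⟨γ, hγ, hγX⟩
    exact ((hrep X).2 ⟨γ, hγ, rfl⟩).trans hγX
  · obtain ⟨γ, hγ, hγX⟩ := (hrep X).1
    exact ⟨γ, hγ, hγX ▸ hX⟩

noncomputable def maxLoss (X : Ω →ᵇ ℝ) : ℝ := ⨆ ω, X ω

theorem le_maxLoss (X : Ω →ᵇ ℝ) (ω : Ω) : X ω ≤ maxLoss X :=
  le_ciSup X.isBounded_range.bddAbove ω

/-- The cash-additive envelope of the segment `[0, Z]`: the infimal capital `m` such that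
`X - m ≤ l • Z` for some `l ∈ [0, 1]`. -/
noncomputable def segmentRisk (Z X : Ω →ᵇ ℝ) : ℝ :=
  ⨅ l : Icc (0 : ℝ) 1, maxLoss (X - (l : ℝ) • Z)

theorem le_segmentRisk (Z : Ω →ᵇ ℝ) {ρ : (Ω →ᵇ ℝ) → ℝ} (hρ : IsRiskMeasure ρ)
    (hs : IsStarShaped ρ) (hZ : ρ Z ≤ 0) (X : Ω →ᵇ ℝ) : ρ X ≤ segmentRisk Z X := by
  refine le_ciInf fun ⟨l, hl⟩ => ?_
  have hX : X ≤ l • Z + const Ω (maxLoss (X - l • Z)) := fun ω => by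
    have := le_maxLoss (X - l • Z) ω
    show X ω ≤ (l • Z + const Ω (maxLoss (X - l • Z))) ω
    simp only [coe_sub, coe_add, coe_smul, Pi.sub_apply, Pi.add_apply, smul_eq_mul,
      const_apply] at this ⊢
    linarith
  calc ρ X ≤ ρ (l • Z + const Ω (maxLoss (X - l • Z))) := hρ.1 _ _ hX
    _ = ρ (l • Z) + maxLoss (X - l • Z) := hρ.map_add_const _ _
    _ ≤ maxLoss (X - l • Z) := by linarith [hs.map_smul_nonpos hρ.2.2 hZ hl]

variable [Nonempty Ω]

theorem isRiskMeasure_maxLoss : IsRiskMeasure (maxLoss (Ω := Ω)) := by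
  refine ⟨fun X Y hYX => ciSup_le fun ω => (hYX ω).trans (le_maxLoss X ω), fun X m => ?_, ?_⟩
  · rw [maxLoss, maxLoss, ciSup_sub X.isBounded_range.bddAbove]
    rfl
  · simp [maxLoss]

theorem isConvex_maxLoss : IsConvex (maxLoss (Ω := Ω)) := fun X Y t ht =>
  ciSup_le fun ω => by
    have := le_maxLoss X ω
    have := le_maxLoss Y ω
    simp only [coe_add, coe_smul, Pi.add_apply, smul_eq_mul]
    nlinarith [ht.1, ht.2]

variable (Z : Ω →ᵇ ℝ)

theorem bddBelow_range_maxLoss_sub_smul (X : Ω →ᵇ ℝ) :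
    BddBelow (range fun l : Icc (0 : ℝ) 1 => maxLoss (X - (l : ℝ) • Z)) := by
  refine ⟨-(‖X‖ + ‖Z‖), ?_⟩
  rintro _ ⟨⟨l, hl⟩, rfl⟩
  have hlZ : ‖l • Z‖ ≤ ‖Z‖ := by
    rw [norm_smul, Real.norm_of_nonneg hl.1]
    exact mul_le_of_le_one_left (norm_nonneg Z) hl.2
  linarith [isRiskMeasure_maxLoss.neg_norm_le (X - l • Z), norm_sub_le X (l • Z)]

theorem segmentRisk_le {l : ℝ} (hl : l ∈ Icc (0 : ℝ) 1) (X : Ω →ᵇ ℝ) :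
    segmentRisk Z X ≤ maxLoss (X - l • Z) :=
  ciInf_le (bddBelow_range_maxLoss_sub_smul Z X) ⟨l, hl⟩

theorem segmentRisk_mono {X Y : Ω →ᵇ ℝ} (h : Y ≤ X) : segmentRisk Z Y ≤ segmentRisk Z X :=
  ciInf_mono (bddBelow_range_maxLoss_sub_smul Z Y) fun _ =>
    isRiskMeasure_maxLoss.1 _ _ (sub_le_sub_right h _)

theorem segmentRisk_sub_const (X : Ω →ᵇ ℝ) (m : ℝ) :
    segmentRisk Z (X - const Ω m) = segmentRisk Z X - m := by
  simp only [segmentRisk, ciInf_sub (bddBelow_range_maxLoss_sub_smul Z X),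
    sub_right_comm _ (const Ω m), isRiskMeasure_maxLoss.2.1]

theorem isConvex_segmentRisk : IsConvex (segmentRisk Z) := by
  intro X Y t ht
  simp only [segmentRisk]
  rw [Real.mul_iInf_of_nonneg ht.1, Real.mul_iInf_of_nonneg (sub_nonneg.2 ht.2)]
  refine le_ciInf_add_ciInf fun l₁ l₂ => ?_
  have hl : t * l₁ + (1 - t) * l₂ ∈ Icc (0 : ℝ) 1 :=
    convex_Icc 0 1 l₁.2 l₂.2 ht.1 (sub_nonneg.2 ht.2) (add_sub_cancel t 1)
  have hmix : t • X + (1 - t) • Y - (t * l₁ + (1 - t) * l₂) • Z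
      = t • (X - (l₁ : ℝ) • Z) + (1 - t) • (Y - (l₂ : ℝ) • Z) := by
    simp only [smul_sub, add_smul, mul_smul]
    abel
  calc segmentRisk Z (t • X + (1 - t) • Y)
      ≤ maxLoss (t • X + (1 - t) • Y - (t * l₁ + (1 - t) * l₂) • Z) := segmentRisk_le Z hl _
    _ ≤ _ := hmix ▸ isConvex_maxLoss _ _ t ht

theorem isRiskMeasure_segmentRisk {ρ : (Ω →ᵇ ℝ) → ℝ} (hρ : IsRiskMeasure ρ)
    (hs : IsStarShaped ρ) (hZ : ρ Z ≤ 0) : IsRiskMeasure (segmentRisk Z) := by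
  refine ⟨fun X Y => segmentRisk_mono Z, segmentRisk_sub_const Z, le_antisymm ?_ ?_⟩
  · simpa [isRiskMeasure_maxLoss.2.2] using segmentRisk_le Z (left_mem_Icc.2 zero_le_one) 0
  · simpa [hρ.2.2] using le_segmentRisk Z hρ hs hZ 0

theorem segmentRisk_sub_const_self_le (m : ℝ) : segmentRisk (Z - const Ω m) Z ≤ m := by
  simpa [isRiskMeasure_maxLoss.map_const] using
    segmentRisk_le (Z - const Ω m) (right_mem_Icc.2 zero_le_one) Z

theorem isLeast_iSup_of_isStarShaped {ι : Type*} [Nonempty ι]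
    {ρ : ι → (Ω →ᵇ ℝ) → ℝ} (hrm : ∀ i, IsRiskMeasure (ρ i)) (hss : ∀ i, IsStarShaped (ρ i))
    {Γ : ι → Set ((Ω →ᵇ ℝ) → ℝ)} (hrep : ∀ i X, IsLeast {y | ∃ γ ∈ Γ i, y = γ X} (ρ i X))
    (X : Ω →ᵇ ℝ) :
    IsLeast {y | ∃ γ ∈ ⋂ i, relaxation (Γ i), y = γ X} (⨆ i, ρ i X) := by
  have hlower : ∀ γ ∈ ⋂ i, relaxation (Γ i), ∀ Y, ⨆ i, ρ i Y ≤ γ Y := fun γ hγ Y =>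
    ciSup_le fun i => ((mem_relaxation_iff (hrep i)).1 (mem_iInter.1 hγ i)).2 Y
  refine ⟨?_, by rintro _ ⟨γ, hγ, rfl⟩; exact hlower γ hγ X⟩
  set c := ⨆ i, ρ i X
  have hacc : ∀ i, ρ i (X - const Ω c) ≤ 0 := fun i => by
    rw [(hrm i).2.1, sub_nonpos]
    exact le_ciSup ⟨‖X‖, by rintro _ ⟨j, rfl⟩; exact (hrm j).le_norm X⟩ i
  have hmem : segmentRisk (X - const Ω c) ∈ ⋂ i, relaxation (Γ i) :=
    mem_iInter.2 fun i => (mem_relaxation_iff (hrep i)).2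
      ⟨⟨isRiskMeasure_segmentRisk _ (hrm i) (hss i) (hacc i), isConvex_segmentRisk _⟩,
        le_segmentRisk _ (hrm i) (hss i) (hacc i)⟩
  exact ⟨_, hmem, le_antisymm (hlower _ hmem X) (segmentRisk_sub_const_self_le X c)⟩

end RiskMeasure

theorem robust_optimization_of_star_shaped_risk_measures_general
    {Ω : Type*} [TopologicalSpace Ω] [Nonempty Ω]
    {ι : Type*} [Nonempty ι]
    (ρ : ι → (Ω →ᵇ ℝ) → ℝ)
    (hrm : ∀ i, IsRiskMeasure (ρ i)) (hss : ∀ i, IsStarShaped (ρ i))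
    (Γ : ι → Set ((Ω →ᵇ ℝ) → ℝ))
    (hrep : ∀ i, ∀ X : Ω →ᵇ ℝ, IsLeast {y : ℝ | ∃ γ ∈ Γ i, y = γ X} (ρ i X))
    {A : Type*} (Xf : A → (Ω →ᵇ ℝ)) :
    -- the robust minimization problem reduces to convex risk measures
    (sInf {y : ℝ | ∃ a : A, y = ⨆ i, ρ i (Xf a)} =
      sInf {y : ℝ | ∃ γ ∈ ⋂ i, relaxation (Γ i), ∃ a : A, y = γ (Xf a)}) ∧
    -- characterization of the minimizers
    (∀ a' : A,
      ((∀ a : A, (⨆ i, ρ i (Xf a')) ≤ ⨆ i, ρ i (Xf a)) ↔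
        ∃ γ' ∈ ⋂ i, relaxation (Γ i),
          ∀ a : A, ∀ γ ∈ ⋂ i, relaxation (Γ i), γ' (Xf a') ≤ γ (Xf a))) :=
  have hmin := isLeast_iSup_of_isStarShaped hrm hss hrep
  ⟨sInf_range_eq_sInf_of_isLeast hmin Xf, forall_le_iff_exists_forall_le_of_isLeast hmin Xf⟩

theorem robust_optimization_of_star_shaped_risk_measures
    {Ω : Type*} [TopologicalSpace Ω] [DiscreteTopology Ω] [Nonempty Ω]
    {ι : Type*} [Nonempty ι]
    (ρ : ι → (Ω →ᵇ ℝ) → ℝ)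
    (hrm : ∀ i, IsRiskMeasure (ρ i)) (hss : ∀ i, IsStarShaped (ρ i))
    (Γ : ι → Set ((Ω →ᵇ ℝ) → ℝ))
    (hΓ : ∀ i, ∀ γ ∈ Γ i, IsRiskMeasure γ ∧ IsConvex γ)
    (hrep : ∀ i, ∀ X : Ω →ᵇ ℝ, IsLeast {y : ℝ | ∃ γ ∈ Γ i, y = γ X} (ρ i X))
    {A : Type*} [Nonempty A] (Xf : A → (Ω →ᵇ ℝ)) :
    -- the robust minimization problem reduces to convex risk measures
    (sInf {y : ℝ | ∃ a : A, y = ⨆ i, ρ i (Xf a)} =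
      sInf {y : ℝ | ∃ γ ∈ ⋂ i, relaxation (Γ i), ∃ a : A, y = γ (Xf a)}) ∧
    -- characterization of the minimizers
    (∀ a' : A,
      ((∀ a : A, (⨆ i, ρ i (Xf a')) ≤ ⨆ i, ρ i (Xf a)) ↔
        ∃ γ' ∈ ⋂ i, relaxation (Γ i),
          ∀ a : A, ∀ γ ∈ ⋂ i, relaxation (Γ i), γ' (Xf a') ≤ γ (Xf a))) :=
  robust_optimization_of_star_shaped_risk_measures_general ρ hrm hss Γ hrep Xf
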